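/- arXiv:2008.04728 — 6 statements merged into one kernel-verified Lean document; each statement's English description precedes it below -/
import Mathlib

section
/- Let A be a commutative ring which is a ℤ_(p)-algebra, M an A-module, and w : A → M an FW-derivation. Then p·w(a) = 0 for every a ∈ A. -/
open scoped TensorProduct

/-- The integer coefficient `(p-1)!/(i!(p-i)!) = C(p,i)/p` appearing in the polynomial `P`. -/
def fwCoeff (p i : ℕ) : ℕ := p.choose i / p

/-- The polynomial `P(a,b) = Σ_{i=1}^{p-1} ((p-1)!/(i!(p-i)!)) a^i b^{p-i}`,
so that `p · P(a,b) = (a+b)^p - a^p - b^p`. -/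
def fwP (p : ℕ) {A : Type*} [CommRing A] (a b : A) : A :=
  ∑ i ∈ Finset.Ioo 0 p, fwCoeff p i • (a ^ i * b ^ (p - i))

/-- A Frobenius–Witt derivation: `w(a+b) = w(a) + w(b) - P(a,b)·w(p·1)` and
`w(ab) = b^p·w(a) + a^p·w(b)`. -/
def IsFWDeriv (p : ℕ) {A M : Type*} [CommRing A] [AddCommGroup M] [Module A M]
    (w : A → M) : Prop :=
  (∀ a b : A, w (a + b) = w a + w b - fwP p a b • w (p : A)) ∧
  (∀ a b : A, w (a * b) = b ^ p • w a + a ^ p • w b)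

/-- `A` is a `ℤ_(p)`-algebra: every integer coprime to `p` is invertible in `A`. -/
def IsZpAlgebra (p : ℕ) (A : Type*) [CommRing A] : Prop :=
  ∀ n : ℤ, IsCoprime n (p : ℤ) → IsUnit (n : A)

/-- `fwD p n = P(n,1)` as a natural number. -/
def fwD (p n : ℕ) : ℕ := ∑ i ∈ Finset.Ioo 0 p, fwCoeff p i * n ^ i

lemma fwD_spec (p : ℕ) (hp : p.Prime) (n : ℕ) :
    p * fwD p n + n ^ p + 1 = (n + 1) ^ p := by
  have hs : Finset.range (p + 1) = insert 0 (insert p (Finset.Ioo 0 p)) := by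
    ext x; simp only [Finset.mem_range, Finset.mem_insert, Finset.mem_Ioo]; omega
  have h0 : (0 : ℕ) ∉ insert p (Finset.Ioo 0 p) := by
    simp only [Finset.mem_insert, Finset.mem_Ioo]
    push_neg
    exact ⟨hp.pos.ne, by omega⟩
  have hpn : p ∉ Finset.Ioo 0 p := by simp
  have hsum : p * fwD p n = ∑ i ∈ Finset.Ioo 0 p, n ^ i * 1 ^ (p - i) * p.choose i := by
    rw [fwD, Finset.mul_sum]
    refine Finset.sum_congr rfl fun i hi => ?_
    obtain ⟨hi1, hi2⟩ := Finset.mem_Ioo.mp hi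
    rw [fwCoeff, ← mul_assoc, Nat.mul_div_cancel' (hp.dvd_choose_self hi1.ne' hi2)]
    ring
  rw [add_pow, hs, Finset.sum_insert h0, Finset.sum_insert hpn, hsum]
  simp only [pow_zero, one_pow, one_mul, mul_one, Nat.choose_zero_right, Nat.choose_self,
    Nat.sub_self, Nat.cast_id]
  ring

/-- Cumulative coefficients: `p * fwC p n + n = n ^ p`. -/
def fwC (p : ℕ) : ℕ → ℕ
  | 0 => 0
  | n + 1 => fwC p n + fwD p n

lemma fwC_spec (p : ℕ) (hp : p.Prime) (n : ℕ) : p * fwC p n + n = n ^ p := by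
  induction n with
  | zero => simp [fwC, zero_pow hp.ne_zero]
  | succ n ih =>
    have := fwD_spec p hp n
    simp only [fwC, Nat.mul_add]
    omega

lemma fwP_cast_mul {A : Type*} [CommRing A] (p : ℕ) (n : ℕ) (a : A) :
    fwP p ((n : A) * a) a = (fwD p n : A) * a ^ p := by
  rw [fwP, fwD, Nat.cast_sum, Finset.sum_mul]
  refine Finset.sum_congr rfl fun i hi => ?_
  obtain ⟨_, hi2⟩ := Finset.mem_Ioo.mp hi
  have : a ^ i * a ^ (p - i) = a ^ p := by
    rw [← pow_add, Nat.add_sub_cancel' hi2.le]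
  rw [nsmul_eq_mul, mul_pow, Nat.cast_mul]
  push_cast
  rw [mul_assoc, mul_assoc, this]

theorem fw_p_torsion {A M : Type*} [CommRing A] [AddCommGroup M] [Module A M]
    (p : ℕ) (hp : p.Prime) (hZp : IsZpAlgebra p A)
    (w : A → M) (hw : IsFWDeriv p w) :
    ∀ a : A, p • w a = 0 := by
  obtain ⟨hadd, hmul⟩ := hw
  -- w 0 = 0 and w 1 = 0
  have hw0 : w 0 = 0 := by
    have := hmul 0 0
    simpa [zero_pow hp.ne_zero] using this
  have hw1 : w 1 = 0 := by
    have := hmul 1 1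
    rw [mul_one, one_pow, one_smul] at this
    have h2 : w 1 + w 1 = w 1 + 0 := by rw [add_zero, ← this]
    exact (add_left_cancel h2)
  -- the key additive formula
  have key : ∀ n : ℕ, ∀ a : A, w ((n : A) * a) = n • w a - fwC p n • (a ^ p • w (p : A)) := by
    intro n
    induction n with
    | zero => intro a; simp [fwC, hw0]
    | succ n ih =>
      intro a
      have hcast : ((n + 1 : ℕ) : A) * a = (n : A) * a + a := by push_cast; ring
      rw [hcast, hadd ((n : A) * a) a, ih a, fwP_cast_mul]
      have hD : ((fwD p n : A) * a ^ p) • w (p : A) = fwD p n • (a ^ p • w (p : A)) := by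
        rw [mul_smul, Nat.cast_smul_eq_nsmul]
      rw [hD]
      show _ = (n + 1) • w a - (fwC p n + fwD p n) • (a ^ p • w (p : A))
      rw [succ_nsmul, add_nsmul]
      abel
  -- special values at n = p
  have hCp : fwC p p + 1 = p ^ (p - 1) := by
    have h1 := fwC_spec p hp p
    have h2 : p ^ p = p * p ^ (p - 1) := by
      rw [← pow_sub_one_mul hp.ne_zero p]; ring
    rw [h2] at h1
    have h3 : p * (fwC p p + 1) = p * p ^ (p - 1) := by
      rw [Nat.mul_add, mul_one]; omega
    exact Nat.eq_of_mul_eq_mul_left hp.pos h3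
  -- p^(p-1) • w p = 0
  have hwp : (p ^ (p - 1)) • w (p : A) = 0 := by
    have h := key p 1
    rw [mul_one, one_pow, one_smul, hw1, smul_zero, zero_sub] at h
    have h' : w (p : A) + fwC p p • w (p : A) = 0 := eq_neg_iff_add_eq_zero.mp h
    have : (fwC p p + 1) • w (p : A) = 0 := by
      rw [add_nsmul, one_nsmul, add_comm]
      exact h'
    rwa [hCp] at this
  intro a
  -- combine additive and multiplicative formulas for w(p * a)
  have h1 := key p a
  have h2 := hmul (p : A) a
  rw [h1] at h2
  -- p • w a - fwC p p • (a^p • w p) = a^p • w p + p^p • w a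
  have h3 : p • w a - (p : A) ^ p • w a = (fwC p p + 1) • (a ^ p • w (p : A)) := by
    rw [add_nsmul, one_nsmul]
    have := h2
    abel_nf
    abel_nf at this
    linear_combination (norm := abel) this
  rw [hCp] at h3
  have h4 : (p ^ (p - 1)) • (a ^ p • w (p : A)) = 0 := by
    rw [smul_comm, hwp, smul_zero]
  rw [h4] at h3
  -- so (p - p^p) • w a = 0  (as A-scalars)
  have h5 : ((p : A) - (p : A) ^ p) • w a = 0 := by
    rw [sub_smul, Nat.cast_smul_eq_nsmul]
    exact h3
  have hfact : (p : A) - (p : A) ^ p = (1 - (p : A) ^ (p - 1)) * (p : A) := by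
    rw [← pow_sub_one_mul hp.ne_zero (p : A)]; ring
  rw [hfact, mul_smul] at h5
  -- 1 - p^(p-1) is a unit
  have hcop : IsCoprime (1 - (p : ℤ) ^ (p - 1)) (p : ℤ) := by
    have h2le := hp.two_le
    refine ⟨1, (p : ℤ) ^ (p - 2), ?_⟩
    have hx : (p : ℤ) ^ (p - 2) * (p : ℤ) = (p : ℤ) ^ (p - 1) := by
      rw [← pow_succ]
      congr 1
      omega
    rw [hx]; ring
  have hu : IsUnit ((1 : A) - (p : A) ^ (p - 1)) := by
    have := hZp _ hcop
    have hc : (((1 - (p : ℤ) ^ (p - 1)) : ℤ) : A) = 1 - (p : A) ^ (p - 1) := by push_cast; ring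
    rwa [hc] at this
  obtain ⟨u, hu⟩ := hu
  have h6 : (p : A) • w a = 0 := by
    have : ((u⁻¹ : Aˣ) : A) • (((u : A)) • ((p : A) • w a)) = 0 := by
      rw [hu, h5, smul_zero]
    rwa [smul_smul, Units.inv_mul, one_smul] at this
  rwa [Nat.cast_smul_eq_nsmul] at h6
end

section
/- Let A be a commutative ring that is torsion-free as an abelian group (flat over ℤ), and assume the Frobenius endomorphism x ↦ x^p of A/pA is bijective. Then there is a well-defined map w : A → A/pA satisfying w(a^p + p·b) = b^p mod pA for all a, b ∈ A (every element of A is of this form), and this map w is an FW-derivation, where A/pA is regarded as an A-module via the quotient map. -/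
open scoped TensorProduct

/-! Write `Ā = A/pA` and `r ↦ r̄` for the quotient map. Frobenius surjectivity on `Ā` lets every
`r` be written `a ^ p + p * b`. If also `a ^ p + p * b = a' ^ p + p * b'`, then `ā = ā'` by
Frobenius injectivity, so `p ^ 2 ∣ a ^ p - a' ^ p = p * (b' - b)`, and cancelling `p`
(torsion-freeness) gives `b̄ = b̄'`; hence `w r = b̄ ^ p` is well defined. Both derivation rules
then come from rewriting `x + y` and `x * y` in the form `a ^ p + p * b`, using
`(a + c) ^ p = a ^ p + c ^ p + p * P(a, c)`, and applying the Frobenius of `Ā`, a ring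
endomorphism since `p = 0` in `Ā`. -/

theorem add_pow_prime_eq_add_add_mul_fwP {A : Type*} [CommRing A] {p : ℕ} (hp : p.Prime)
    (x y : A) : (x + y) ^ p = x ^ p + y ^ p + p * fwP p x y := by
  rw [add_pow_prime_eq' hp, fwP]
  congr 2
  refine Finset.sum_congr rfl fun i _ => ?_
  rw [fwCoeff, nsmul_eq_mul]
  ring

theorem map_fwP {A B : Type*} [CommRing A] [CommRing B] (f : A →+* B) (p : ℕ) (a b : A) :
    f (fwP p a b) = fwP p (f a) (f b) := by
  simp only [fwP, map_sum, map_nsmul, map_mul, map_pow]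

/-- Unlike `frobenius`, this needs no `CharP` instance, so it also covers the zero ring. -/
@[simps]
def frobeniusOfCastEqZero (R : Type*) [CommRing R] {p : ℕ} (hp : p.Prime) (h0 : (p : R) = 0) :
    R →+* R where
  toFun x := x ^ p
  map_one' := one_pow p
  map_mul' x y := mul_pow x y p
  map_zero' := zero_pow hp.ne_zero
  map_add' x y := by
    rw [add_pow_prime_eq_add_add_mul_fwP hp, h0, zero_mul, add_zero]

section Quotient

variable {A : Type*} [CommRing A]

local notation "mk" t => Ideal.Quotient.mk (Ideal.span {t})

theorem Ideal.Quotient.natCast_span_singleton_self (p : ℕ) : (p : A ⧸ Ideal.span {(p : A)}) = 0 := by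
  rw [← map_natCast (mk (p : A)), Ideal.Quotient.mk_singleton_self]

theorem exists_eq_pow_add_mul_of_surjective {t : A} {n : ℕ}
    (hF : Function.Surjective fun x : A ⧸ Ideal.span {t} => x ^ n) (r : A) :
    ∃ a b : A, r = a ^ n + t * b := by
  obtain ⟨u, hu⟩ := hF ((mk t) r)
  obtain ⟨a, rfl⟩ := Ideal.Quotient.mk_surjective u
  have hmem : r - a ^ n ∈ Ideal.span {t} := by
    rw [← Ideal.Quotient.eq, map_pow]
    exact hu.symm
  obtain ⟨b, hb⟩ := Ideal.mem_span_singleton.mp hmem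
  exact ⟨a, b, by linear_combination hb⟩

theorem mk_eq_of_pow_add_mul_eq {p : ℕ} (hreg : IsLeftRegular (p : A))
    (hinj : Function.Injective fun x : A ⧸ Ideal.span {(p : A)} => x ^ p) {a b a' b' : A}
    (h : a ^ p + p * b = a' ^ p + p * b') : (mk (p : A)) b = (mk (p : A)) b' := by
  have hmk : ((mk (p : A)) a) ^ p = ((mk (p : A)) a') ^ p := by
    simpa [Ideal.Quotient.natCast_span_singleton_self] using congrArg (mk (p : A)) h
  have ha : (p : A) ∣ a - a' :=
    Ideal.mem_span_singleton.mp (Ideal.Quotient.eq.mp (hinj hmk))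
  obtain ⟨e, he⟩ := by simpa using dvd_sub_pow_of_dvd_sub ha 1
  have hb : (p : A) * (b' - b) = p * (p * e) := by linear_combination he - h
  rw [Ideal.Quotient.eq, Ideal.mem_span_singleton]
  exact ⟨-e, by linear_combination -(hreg hb)⟩

theorem isFWDeriv_of_apply_pow_add_mul {p : ℕ} (hp : p.Prime)
    (hdecomp : ∀ r : A, ∃ a b : A, r = a ^ p + p * b) (w : A → A ⧸ Ideal.span {(p : A)})
    (hw : ∀ a b : A, w (a ^ p + p * b) = ((mk (p : A)) b) ^ p) :
    IsFWDeriv p w := by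
  have h0 := Ideal.Quotient.natCast_span_singleton_self (A := A) p
  set φ := mk (p : A)
  set F := frobeniusOfCastEqZero _ hp h0
  have hwF : ∀ a b : A, w (a ^ p + p * b) = F (φ b) := hw
  have hφF : ∀ a b : A, φ (a ^ p + p * b) = F (φ a) := by
    simp [F, frobeniusOfCastEqZero_apply, φ, h0]
  have hsmul : ∀ (r : A) (x : A ⧸ Ideal.span {(p : A)}), r • x = φ r * x := fun _ _ => rfl
  have hwp : w p = 1 := by
    simpa [zero_pow hp.ne_zero] using hw 0 1
  refine ⟨fun x y => ?_, fun x y => ?_⟩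
  · obtain ⟨a, b, rfl⟩ := hdecomp x
    obtain ⟨c, d, rfl⟩ := hdecomp y
    have hsum : a ^ p + p * b + (c ^ p + p * d) = (a + c) ^ p + p * (b + d - fwP p a c) := by
      rw [add_pow_prime_eq_add_add_mul_fwP hp]
      ring
    simp only [hsum, hwF, hwp, hsmul, mul_one, map_fwP, hφF, map_add, map_sub]
  · obtain ⟨a, b, rfl⟩ := hdecomp x
    obtain ⟨c, d, rfl⟩ := hdecomp y
    have hprod : (a ^ p + p * b) * (c ^ p + p * d)
        = (a * c) ^ p + p * (a ^ p * d + c ^ p * b + p * (b * d)) := by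
      ring
    simp only [hprod, hwF, hsmul, hφF, map_add, map_mul, map_pow, map_natCast, h0, zero_mul,
      add_zero]
    ring

end Quotient

theorem fw_witt_deriv {A : Type*} [CommRing A]
    (p : ℕ) (hp : p.Prime)
    (htf : ∀ (n : ℤ) (a : A), n ≠ 0 → n • a = 0 → a = 0)
    (hF : Function.Bijective fun x : A ⧸ Ideal.span {(p : A)} => x ^ p) :
    (∀ r : A, ∃ a b : A, r = a ^ p + p * b) ∧
    ∃ w : A → A ⧸ Ideal.span {(p : A)},
      (∀ a b : A, w (a ^ p + p * b) = (Ideal.Quotient.mk (Ideal.span {(p : A)}) b) ^ p) ∧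
      IsFWDeriv p w := by
  have hreg : IsLeftRegular (p : A) := fun x y h =>
    sub_eq_zero.mp (htf p (x - y) (by exact_mod_cast hp.ne_zero)
      (by rw [zsmul_eq_mul, Int.cast_natCast, mul_sub, sub_eq_zero]; exact h))
  have hdecomp := exists_eq_pow_add_mul_of_surjective hF.2
  choose a b hab using id hdecomp
  let w : A → A ⧸ Ideal.span {(p : A)} := fun r => Ideal.Quotient.mk _ (b r) ^ p
  have hw : ∀ x y, w (x ^ p + p * y) = Ideal.Quotient.mk (Ideal.span {(p : A)}) y ^ p :=
    fun _ _ => congrArg (· ^ p) (mk_eq_of_pow_add_mul_eq hreg hF.1 (hab _).symm)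
  exact ⟨hdecomp, w, hw, isFWDeriv_of_apply_pow_add_mul hp hdecomp w hw⟩
end

section
/- Let A be a commutative ring which is a ℤ_(p)-algebra with no p-torsion (so flat over ℤ_(p)), such that the Frobenius endomorphism of A/pA is bijective. Let φ : A → A be a ring endomorphism with φ(a) ≡ a^p mod pA for all a, and let φ₁ : A → A be the unique map satisfying φ(a) = a^p + p·φ₁(a). Then for every A-module M and every FW-derivation w : A → M, one has w(r) = φ₁(r)·w(p·1_A) for all r ∈ A. -/
open scoped TensorProduct

/-- `p · P(a,b) = (a+b)^p - a^p - b^p`. -/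
lemma fwP_mul_nat (p : ℕ) (hp : p.Prime) {A : Type*} [CommRing A] (a b : A) :
    (p : A) * fwP p a b = (a + b) ^ p - a ^ p - b ^ p := by
  have hins : Finset.range (p + 1) = insert 0 (insert p (Finset.Ioo 0 p)) := by
    ext x
    simp only [Finset.mem_range, Finset.mem_insert, Finset.mem_Ioo]
    omega
  have h2 := hp.two_le
  rw [add_pow, hins,
    Finset.sum_insert (by simp only [Finset.mem_insert, Finset.mem_Ioo]; omega),
    Finset.sum_insert (by simp)]
  have hsum : ∑ i ∈ Finset.Ioo 0 p, a ^ i * b ^ (p - i) * (p.choose i : A)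
      = (p : A) * fwP p a b := by
    rw [fwP, Finset.mul_sum]
    refine (Finset.sum_congr rfl fun i hi => ?_).symm
    simp only [Finset.mem_Ioo] at hi
    have hd : p ∣ p.choose i := hp.dvd_choose_self hi.1.ne' hi.2
    rw [nsmul_eq_mul, fwCoeff, ← mul_assoc, ← Nat.cast_mul, Nat.mul_div_cancel' hd]
    ring
  rw [hsum]
  simp only [pow_zero, Nat.sub_zero, Nat.choose_zero_right, Nat.cast_one, mul_one, one_mul,
    Nat.sub_self, Nat.choose_self]
  ring

theorem fw_values_via_frobenius_lift {A : Type*} [CommRing A]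
    (p : ℕ) (hp : p.Prime) (hZp : IsZpAlgebra p A)
    (htf : ∀ a : A, (p : A) * a = 0 → a = 0)
    (hF : Function.Bijective fun x : A ⧸ Ideal.span {(p : A)} => x ^ p)
    (φ : A →+* A)
    (hφ : ∀ a : A, Ideal.Quotient.mk (Ideal.span {(p : A)}) (φ a) =
      (Ideal.Quotient.mk (Ideal.span {(p : A)}) a) ^ p)
    (φ₁ : A → A) (hφ₁ : ∀ a : A, φ a = a ^ p + p * φ₁ a)
    (M : Type*) [AddCommGroup M] [Module A M]
    (w : A → M) (hw : IsFWDeriv p w) :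
    ∀ r : A, w r = φ₁ r • w ((p : A)) := by
  obtain ⟨hwadd, hwmul⟩ := hw
  have hp2 : 2 ≤ p := hp.two_le
  have hcancel : ∀ x y : A, (p : A) * x = (p : A) * y → x = y := by
    intro x y h
    have h0 : (p : A) * (x - y) = 0 := by rw [mul_sub, h, sub_self]
    exact sub_eq_zero.mp (htf _ h0)
  -- basic values of w
  have hw1 : w 1 = 0 := by
    have h := hwmul 1 1
    simp only [one_pow, one_smul, mul_one] at h
    have h2 : w 1 + 0 = w 1 + w 1 := by rw [add_zero]; exact h
    exact (add_left_cancel h2).symm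
  have hw0 : w 0 = 0 := by
    have h := hwmul 0 0
    simpa only [mul_zero, zero_pow hp.pos.ne', zero_smul, add_zero] using h
  -- properties of φ₁
  have hφ₁one : φ₁ 1 = 0 := by
    apply hcancel
    have h := hφ₁ 1
    rw [map_one, one_pow] at h
    rw [mul_zero]
    linear_combination -h
  have hφ₁zero : φ₁ 0 = 0 := by
    apply hcancel
    have h := hφ₁ 0
    rw [map_zero, zero_pow hp.pos.ne'] at h
    rw [mul_zero]
    linear_combination -h
  have hφ₁add : ∀ a b : A, φ₁ (a + b) = φ₁ a + φ₁ b - fwP p a b := by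
    intro a b
    apply hcancel
    have h4 : φ (a + b) = φ a + φ b := map_add φ a b
    rw [hφ₁ (a + b), hφ₁ a, hφ₁ b] at h4
    have h5 := fwP_mul_nat p hp a b
    linear_combination h4 + h5
  have hφ₁mul : ∀ a b : A, φ₁ (a * b)
      = b ^ p * φ₁ a + a ^ p * φ₁ b + p * (φ₁ a * φ₁ b) := by
    intro a b
    apply hcancel
    have h4 : φ (a * b) = φ a * φ b := map_mul φ a b
    rw [hφ₁ (a * b), hφ₁ a, hφ₁ b] at h4
    linear_combination h4 - mul_pow a b p
  have hpp : (p : A) ^ p = (p : A) * (p : A) ^ (p - 1) := by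
    have e : p = p - 1 + 1 := by omega
    calc (p : A) ^ p = (p : A) ^ (p - 1 + 1) := by rw [← e]
      _ = (p : A) * (p : A) ^ (p - 1) := by rw [pow_succ]; ring
  have hφ₁p : φ₁ (p : A) = 1 - (p : A) ^ (p - 1) := by
    apply hcancel
    have h := hφ₁ (p : A)
    rw [map_natCast] at h
    linear_combination -h - hpp
  -- the map v
  set v : A → M := fun a => w a - φ₁ a • w (p : A) with hv
  have hv0 : v 0 = 0 := by simp [hv, hw0, hφ₁zero]
  have hvadd : ∀ a b : A, v (a + b) = v a + v b := by
    intro a b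
    simp only [hv, hwadd a b, hφ₁add a b]
    module
  have hvnsmul : ∀ (n : ℕ) (a : A), v (n • a) = n • v a := by
    intro n
    induction n with
    | zero => intro a; simpa using hv0
    | succ k ih =>
      intro a
      rw [succ_nsmul, hvadd, ih, succ_nsmul]
  -- the key torsion identity
  have hkey0 : ∀ a : A, ((p : A) ^ p - (p : A)) • w a
      = -(((p : A) ^ (p - 1) * a ^ p) • w (p : A)) := by
    intro a
    have e1 : w ((p : A) * a) - φ₁ ((p : A) * a) • w (p : A)
        = (p : A) • w a - ((p : A) * φ₁ a) • w (p : A) := by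
      have h := hvnsmul p a
      rw [nsmul_eq_mul, ← Nat.cast_smul_eq_nsmul A] at h
      simp only [hv] at h
      rw [h, smul_sub, smul_smul]
    rw [hwmul, hφ₁mul, hφ₁p, hpp] at e1
    rw [hpp]
    linear_combination (norm := module) e1
  have hwp_tors : ((p : A) ^ (p - 1)) • w (p : A) = 0 := by
    have h := hkey0 1
    rw [hw1, smul_zero, one_pow, mul_one, zero_eq_neg] at h
    exact h
  have hptors : ∀ a : A, (p : A) • w a = 0 := by
    have hkey : ∀ a : A, (((p : A) ^ (p - 1) - 1) * (p : A)) • w a = 0 := by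
      intro a
      have h2 : ((p : A) ^ (p - 1) * a ^ p) • w (p : A) = 0 := by
        rw [mul_smul, smul_comm, hwp_tors, smul_zero]
      have h := hkey0 a
      rw [h2, neg_zero] at h
      rw [← h]
      congr 1
      rw [hpp]; ring
    intro a
    have hcop : IsCoprime ((p : ℤ) ^ (p - 1) - 1) (p : ℤ) := by
      refine ⟨-1, (p : ℤ) ^ (p - 2), ?_⟩
      have h : (p : ℤ) ^ (p - 2) * (p : ℤ) = (p : ℤ) ^ (p - 1) := by
        rw [← pow_succ]
        congr 1
        omega
      rw [h]; ring
    have hu : IsUnit (((p : ℤ) ^ (p - 1) - 1 : ℤ) : A) := hZp _ hcop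
    have hcast : (((p : ℤ) ^ (p - 1) - 1 : ℤ) : A) = (p : A) ^ (p - 1) - 1 := by
      push_cast; ring
    rw [hcast] at hu
    obtain ⟨u, hu⟩ := hu
    have h1 : ((p : A) ^ (p - 1) - 1) • ((p : A) • w a) = 0 := by
      rw [smul_smul, hkey a]
    have h2 : ((u⁻¹ : Aˣ) : A) • (((p : A) ^ (p - 1) - 1) • ((p : A) • w a)) = 0 := by
      rw [h1, smul_zero]
    rwa [← hu, smul_smul, Units.inv_mul, one_smul] at h2
  have hmulp : ∀ (x a : A), ((p : A) * x) • w a = 0 := by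
    intro x a
    rw [mul_comm, mul_smul, hptors, smul_zero]
  have hvtors : ∀ a : A, (p : ℕ) • v a = 0 := by
    intro a
    rw [← Nat.cast_smul_eq_nsmul A]
    simp only [hv]
    rw [smul_sub, hptors, smul_smul, hmulp, sub_self]
  -- Leibniz rule for v
  have hvmul : ∀ a b : A, v (a * b) = b ^ p • v a + a ^ p • v b := by
    intro a b
    simp only [hv, hwmul a b, hφ₁mul a b]
    have h := hmulp (φ₁ a * φ₁ b) (p : A)
    linear_combination (norm := module) -h
  -- v on powers
  have hvpow : ∀ (b : A) (n : ℕ), v (b ^ (n + 1)) = (n + 1) • (b ^ (p * n) • v b) := by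
    intro b n
    induction n with
    | zero => simp
    | succ k ih =>
      have hbs : b ^ (k + 1 + 1) = b * b ^ (k + 1) := by ring
      rw [hbs, hvmul, ih, ← pow_mul, smul_comm (b ^ p), smul_smul, ← pow_add]
      have he1 : (k + 1) * p = p * (k + 1) := by ring
      have he2 : p + p * k = p * (k + 1) := by ring
      rw [he1, he2, succ_nsmul _ (k + 1), add_comm]
  have hvppow : ∀ b : A, v (b ^ p) = 0 := by
    intro b
    have h : v (b ^ ((p - 1) + 1)) = ((p - 1) + 1) • (b ^ (p * (p - 1)) • v b) := hvpow b (p - 1)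
    rw [show (p - 1) + 1 = p by omega] at h
    rw [h, smul_comm, hvtors, smul_zero]
  -- conclusion
  intro r
  obtain ⟨x, hx⟩ := hF.2 (Ideal.Quotient.mk _ r)
  obtain ⟨b, rfl⟩ := Ideal.Quotient.mk_surjective x
  simp only at hx
  have hmk : Ideal.Quotient.mk (Ideal.span {(p : A)}) (b ^ p)
      = Ideal.Quotient.mk (Ideal.span {(p : A)}) r := by
    rw [map_pow]; exact hx
  obtain ⟨c, hc⟩ := Ideal.mem_span_singleton'.mp (Ideal.Quotient.eq.mp hmk)
  have hr : r = b ^ p + (p : A) * (-c) := by linear_combination hc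
  have hvr : v r = 0 := by
    rw [hr, hvadd, hvppow, ← nsmul_eq_mul, hvnsmul, hvtors, add_zero]
  have : w r - φ₁ r • w (p : A) = 0 := hvr
  linear_combination (norm := module) this
end

section
/- Let A be a commutative ring, B a commutative ring with p·1_B = 0, g : A → B a ring homomorphism, M a B-module, and w : A → M a map. The following are equivalent: (1) w is an FW-derivation for the A-module structure on M obtained via g, and w(p·1_A) = 0; (2) w is additive and satisfies w(ab) = g(b)^p·w(a) + g(a)^p·w(b) for all a, b ∈ A, i.e., w is a derivation with respect to the A-module structure on M obtained via the composition of g with the Frobenius endomorphism of B. -/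
open scoped TensorProduct

/-- A Frobenius–Witt derivation of `A` into a `B`-module `M`, where `M` is regarded as an
`A`-module via the ring homomorphism `g : A → B`. -/
def IsFWDerivOver (p : ℕ) {A B M : Type*} [CommRing A] [CommRing B] [AddCommGroup M]
    [Module B M] (g : A →+* B) (w : A → M) : Prop :=
  (∀ a b : A, w (a + b) = w a + w b - g (fwP p a b) • w (p : A)) ∧
  (∀ a b : A, w (a * b) = g b ^ p • w a + g a ^ p • w b)

theorem fw_over_char_p_iff_frobenius_derivation {A B : Type*} [CommRing A] [CommRing B]
    (p : ℕ) (hp : p.Prime) (hB : (p : B) = 0) (g : A →+* B)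
    (M : Type*) [AddCommGroup M] [Module B M] (w : A → M) :
    (IsFWDerivOver p g w ∧ w ((p : A)) = 0) ↔
      ((∀ a b : A, w (a + b) = w a + w b) ∧
        (∀ a b : A, w (a * b) = g b ^ p • w a + g a ^ p • w b)) := by
  constructor
  · rintro ⟨⟨hadd, hmul⟩, hp0⟩
    refine ⟨fun a b => ?_, hmul⟩
    rw [hadd, hp0, smul_zero, sub_zero]
  · rintro ⟨hadd, hmul⟩
    have h1 : w 1 = 0 := by
      have h := hmul 1 1
      simp only [mul_one, map_one, one_pow, one_smul] at h
      exact add_eq_right.mp h.symm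
    have hn : ∀ n : ℕ, w (n : A) = 0 := by
      intro n
      induction n with
      | zero =>
        have h := hadd 0 0
        simp only [add_zero] at h
        rw [Nat.cast_zero]
        exact add_eq_right.mp h.symm
      | succ k ih =>
        push_cast
        rw [hadd, ih, h1, add_zero]
    refine ⟨⟨fun a b => ?_, hmul⟩, hn p⟩
    rw [hadd, hn p, smul_zero, sub_zero]
end

section
/- Let A be a commutative ring, I ⊆ A an ideal, M an A-module, and w : A → M an FW-derivation. Let N ⊆ M be the A-submodule IM + (the A-submodule generated by w(I)). Then the map A/I → M/N sending the class of a to the class of w(a) is well-defined and is an FW-derivation of the ring A/I into the (A/I)-module M/N. -/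
open scoped TensorProduct

theorem fw_quotient_deriv {A M : Type*} [CommRing A] [AddCommGroup M] [Module A M]
    (p : ℕ) (hp : p.Prime) (I : Ideal A) (w : A → M) (hw : IsFWDeriv p w)
    (N : Submodule A M) (hN : N = I • (⊤ : Submodule A M) ⊔ Submodule.span A (w '' I)) :
    ∃ wbar : A ⧸ I → M ⧸ N,
      (∀ a : A, wbar (Ideal.Quotient.mk I a) = Submodule.Quotient.mk (w a)) ∧
      (∀ a b : A,
        wbar (Ideal.Quotient.mk I a + Ideal.Quotient.mk I b) =
          wbar (Ideal.Quotient.mk I a) + wbar (Ideal.Quotient.mk I b) -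
            fwP p a b • wbar ((p : A ⧸ I))) ∧
      (∀ a b : A,
        wbar (Ideal.Quotient.mk I a * Ideal.Quotient.mk I b) =
          b ^ p • wbar (Ideal.Quotient.mk I a) + a ^ p • wbar (Ideal.Quotient.mk I b)) := by
  obtain ⟨hadd, hmul⟩ := hw
  -- key: well-definedness
  have key : ∀ a b : A, a - b ∈ I →
      (Submodule.Quotient.mk (w a) : M ⧸ N) = Submodule.Quotient.mk (w b) := by
    intro a b hab
    rw [Submodule.Quotient.eq]
    set c := a - b with hc
    have ha : a = b + c := by ring
    have hwa : w a = w b + w c - fwP p b c • w (p : A) := by rw [ha]; exact hadd b c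
    have h1 : w c ∈ N := by
      rw [hN]
      exact Submodule.mem_sup_right (Submodule.subset_span ⟨c, hab, rfl⟩)
    have h2 : fwP p b c ∈ I := by
      apply Ideal.sum_mem
      intro i hi
      simp only [Finset.mem_Ioo] at hi
      exact nsmul_mem (I.mul_mem_left _ (I.pow_mem_of_mem hab _ (by omega))) _
    have h3 : fwP p b c • w (p : A) ∈ N := by
      rw [hN]
      exact Submodule.mem_sup_left (Submodule.smul_mem_smul h2 Submodule.mem_top)
    have : w a - w b = w c - fwP p b c • w (p : A) := by rw [hwa]; abel
    rw [this]
    exact sub_mem h1 h3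
  have hmk : ∀ x : A ⧸ I, ∀ a : A, x = Ideal.Quotient.mk I a →
      (Submodule.Quotient.mk (w (Quotient.out x)) : M ⧸ N) = Submodule.Quotient.mk (w a) := by
    intro x a hx; apply key; rw [← Ideal.Quotient.eq, hx]; exact Quotient.out_eq _
  refine ⟨fun x => Submodule.Quotient.mk (w (Quotient.out x)), fun a => hmk _ a rfl, ?_, ?_⟩
  · intro a b
    beta_reduce
    rw [hmk _ a rfl, hmk _ b rfl, show (p : A ⧸ I) = Ideal.Quotient.mk I (p : A) by simp,
      hmk _ (p : A) rfl, hmk _ (a + b) (by rw [map_add]), hadd a b]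
    simp [Submodule.Quotient.mk_sub, Submodule.Quotient.mk_add, Submodule.Quotient.mk_smul]
  · intro a b
    beta_reduce
    rw [hmk _ a rfl, hmk _ b rfl, hmk _ (a * b) (by rw [map_mul]), hmul a b]
    simp [Submodule.Quotient.mk_add, Submodule.Quotient.mk_smul]
end

section
/- For every commutative ring A there exists a universal FW-derivation: an A-module Ω together with an FW-derivation w : A → Ω such that for every A-module M and every FW-derivation δ : A → M there is a unique A-linear map φ : Ω → M with φ ∘ w = δ. -/
open scoped TensorProduct

universe u v

/-- A bundled `A`-module together with a map from `A`. -/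
structure FWModuleData (p : ℕ) (A : Type u) [CommRing A] where
  /-- the underlying module -/
  carrier : Type u
  [isAddCommGroup : AddCommGroup carrier]
  [isModule : Module A carrier]
  /-- the map `A → carrier` -/
  w : A → carrier

attribute [instance] FWModuleData.isAddCommGroup FWModuleData.isModule

/-! Both FW-derivation axioms are `A`-linear relations among the values `w a`, so the universal
FW-derivation is `a ↦ [a]` into the free module on symbols `[a]`, `a ∈ A`, modulo the span of
those relations: a map `δ` is an FW-derivation exactly when the linear extension of `δ` kills
them. -/

namespace FWDeriv

variable {p : ℕ} {A : Type u} [CommRing A] {M : Type v} [AddCommGroup M] [Module A M]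

noncomputable def addRel (p : ℕ) (a b : A) : A →₀ A :=
  Finsupp.single (a + b) 1 -
    (Finsupp.single a 1 + Finsupp.single b 1 - fwP p a b • Finsupp.single (p : A) 1)

noncomputable def mulRel (p : ℕ) (a b : A) : A →₀ A :=
  Finsupp.single (a * b) 1 - (b ^ p • Finsupp.single a 1 + a ^ p • Finsupp.single b 1)

def relations (p : ℕ) (A : Type u) [CommRing A] : Set (A →₀ A) :=
  Set.range (fun x : A × A => addRel p x.1 x.2) ∪ Set.range (fun x : A × A => mulRel p x.1 x.2)

theorem isFWDeriv_iff_relations_subset_ker (δ : A → M) :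
    IsFWDeriv p δ ↔ relations p A ⊆ LinearMap.ker (Finsupp.linearCombination A δ) := by
  simp [IsFWDeriv, relations, Set.union_subset_iff, Set.range_subset_iff, addRel, mulRel,
    sub_eq_zero]

abbrev UniversalModule (p : ℕ) (A : Type u) [CommRing A] : Type u :=
  (A →₀ A) ⧸ Submodule.span A (relations p A)

noncomputable def universal (p : ℕ) (A : Type u) [CommRing A] : A → UniversalModule p A :=
  fun a => Submodule.Quotient.mk (Finsupp.single a 1)

theorem linearCombination_universal :
    Finsupp.linearCombination A (universal p A) = (Submodule.span A (relations p A)).mkQ := by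
  refine Finsupp.lhom_ext fun a c => ?_
  simp [universal, ← Submodule.Quotient.mk_smul]

theorem isFWDeriv_universal : IsFWDeriv p (universal p A) := by
  rw [isFWDeriv_iff_relations_subset_ker, linearCombination_universal, Submodule.ker_mkQ]
  exact Submodule.subset_span

theorem universal_hom_ext {φ ψ : UniversalModule p A →ₗ[A] M}
    (h : ∀ a, φ (universal p A a) = ψ (universal p A a)) : φ = ψ :=
  Submodule.linearMap_qext _ <| Finsupp.lhom_ext' fun a => LinearMap.ext_ring (h a)

noncomputable def lift {δ : A → M} (hδ : IsFWDeriv p δ) : UniversalModule p A →ₗ[A] M :=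
  Submodule.liftQ _ (Finsupp.linearCombination A δ)
    (Submodule.span_le.mpr ((isFWDeriv_iff_relations_subset_ker δ).mp hδ))

theorem lift_universal {δ : A → M} (hδ : IsFWDeriv p δ) (a : A) :
    lift hδ (universal p A a) = δ a := by
  simp [lift, universal]

end FWDeriv

theorem fw_universal_exists_general (p : ℕ) (A : Type u) [CommRing A] :
    ∃ U : FWModuleData p A, IsFWDeriv p U.w ∧
      ∀ (M : Type v) [AddCommGroup M] [Module A M] (δ : A → M), IsFWDeriv p δ →
        ∃! φ : U.carrier →ₗ[A] M, ∀ a : A, φ (U.w a) = δ a :=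
  ⟨⟨FWDeriv.UniversalModule p A, FWDeriv.universal p A⟩, FWDeriv.isFWDeriv_universal,
    fun _ _ _ _ hδ => ⟨FWDeriv.lift hδ, FWDeriv.lift_universal hδ, fun _ hψ =>
      FWDeriv.universal_hom_ext fun a => (hψ a).trans (FWDeriv.lift_universal hδ a).symm⟩⟩

theorem fw_universal_exists (p : ℕ) (hp : p.Prime) (A : Type u) [CommRing A] :
    ∃ U : FWModuleData p A, IsFWDeriv p U.w ∧
      ∀ (M : Type v) [AddCommGroup M] [Module A M] (δ : A → M), IsFWDeriv p δ →
        ∃! φ : U.carrier →ₗ[A] M, ∀ a : A, φ (U.w a) = δ a :=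
  fw_universal_exists_general p A
end
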